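/- Weighted convolution-type bound for a triple-window kernel: let φ, g, ψ ∈ 𝒮(ℝ^d), r ∈ ℝ, and N ∈ ℕ with 2N > d. Then there is C > 0 such that for all nonnegative measurable F : ℝ^{2d} → [0,∞) and G : ℝ^{2d} → [0,∞), ∬ ⟨X⟩^r ∫_{ℝ^{5d}} ⟨ξ+η−Ξ⟩^{−2N} |φ(y−X)| |g(y−x)| |ψ(y−z)| G(z,η) F(x,ξ) dx dy dz dξ dη dX dΞ ≤ C (∫ sup_z G(z,η) dη) (∬ ⟨x⟩^r F(x,ξ) dx dξ). -/

import Mathlib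

open MeasureTheory
open scoped ENNReal NNReal
noncomputable section

/-- The Japanese bracket `⟨x⟩ = (1 + |x|²)^{1/2}`. -/
def jap {d : ℕ} (x : EuclideanSpace ℝ (Fin d)) : ℝ := Real.sqrt (1 + ‖x‖ ^ 2)

/-!
Peetre's inequality `⟨X⟩^r ≤ 2^|r| ⟨y - X⟩^|r| ⟨y - x⟩^|r| ⟨x⟩^r` moves the weight from `X`
to `x`, at the price of polynomial weights on the windows `φ` and `g`, which stay integrable
because they are Schwartz. By Tonelli the `Ξ`-integral then only sees the kernel, and translation
invariance turns it into `∫ ⟨u⟩^(-2N) du`, finite since `2N > d`. Bounding `G (z, η)` by its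
supremum over `z` and integrating out `X`, `y`, `z` by translation invariance again leaves
`(∫ sup_z G) (∬ ⟨x⟩^r F)`.
-/

theorem one_add_norm_add_sq_le {E : Type*} [SeminormedAddGroup E] (a b : E) :
    1 + ‖a + b‖ ^ 2 ≤ 2 * (1 + ‖a‖ ^ 2) * (1 + ‖b‖ ^ 2) := by
  nlinarith [norm_add_le a b, norm_nonneg a, norm_nonneg b, norm_nonneg (a + b),
    sq_nonneg (‖a‖ - ‖b‖), sq_nonneg (‖a‖ * ‖b‖)]

theorem one_add_norm_add_sq_rpow_le {E : Type*} [SeminormedAddGroup E] (s : ℝ) (a b : E) :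
    (1 + ‖a + b‖ ^ 2) ^ s ≤ 2 ^ |s| * (1 + ‖a‖ ^ 2) ^ |s| * (1 + ‖b‖ ^ 2) ^ s := by
  rcases le_or_gt 0 s with hs | hs
  · rw [abs_of_nonneg hs, ← Real.mul_rpow (by positivity) (by positivity),
      ← Real.mul_rpow (by positivity) (by positivity)]
    exact Real.rpow_le_rpow (by positivity) (one_add_norm_add_sq_le a b) hs
  · have h := one_add_norm_add_sq_le (-a) (a + b)
    rw [neg_add_cancel_left, norm_neg] at h
    rw [abs_of_neg hs]
    calc (1 + ‖a + b‖ ^ 2) ^ s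
        = 2 ^ (-s) * (1 + ‖a‖ ^ 2) ^ (-s) * (2 * (1 + ‖a‖ ^ 2) * (1 + ‖a + b‖ ^ 2)) ^ s := by
          rw [Real.mul_rpow (by positivity) (by positivity),
            Real.mul_rpow (by positivity) (by positivity),
            Real.rpow_neg (by positivity), Real.rpow_neg (by positivity)]
          field_simp
      _ ≤ 2 ^ (-s) * (1 + ‖a‖ ^ 2) ^ (-s) * (1 + ‖b‖ ^ 2) ^ s := by
          gcongr ?_ * ?_
          exact Real.rpow_le_rpow_of_nonpos (by positivity) h hs.le

section Convolution

variable {E : Type*} [AddCommGroup E] [MeasurableSpace E] [MeasurableAdd₂ E] [MeasurableNeg E]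
  {μ : Measure E} [SFinite μ] [μ.IsAddLeftInvariant] [μ.IsNegInvariant]

theorem lintegral_lintegral_const_mul_kernel_le {K : E → ℝ≥0∞} {G : E × E → ℝ≥0∞}
    (hK : Measurable K) (hG : Measurable G) (c : ℝ≥0∞) (ξ z : E) :
    ∫⁻ Ξ, ∫⁻ η, c * (K (ξ + η - Ξ) * G (z, η)) ∂μ ∂μ ≤
      c * ((∫⁻ u, K u ∂μ) * ∫⁻ η, ⨆ z, G (z, η) ∂μ) := by
  rw [lintegral_lintegral_swap (by fun_prop)]
  calc ∫⁻ η, ∫⁻ Ξ, c * (K (ξ + η - Ξ) * G (z, η)) ∂μ ∂μ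
      = ∫⁻ η, c * ((∫⁻ u, K u ∂μ) * G (z, η)) ∂μ := by
        refine lintegral_congr fun η => ?_
        rw [lintegral_const_mul _ (by fun_prop), lintegral_mul_const _ (by fun_prop),
          lintegral_sub_left_eq_self]
    _ = c * ((∫⁻ u, K u ∂μ) * ∫⁻ η, G (z, η) ∂μ) := by
        rw [lintegral_const_mul _ (by fun_prop), lintegral_const_mul _ (by fun_prop)]
    _ ≤ c * ((∫⁻ u, K u ∂μ) * ∫⁻ η, ⨆ z, G (z, η) ∂μ) := by
        gcongr with η
        exact le_iSup (fun z => G (z, η)) z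

theorem lintegral_translates_mul {P Q R : E → ℝ≥0∞} {F : E × E → ℝ≥0∞}
    (hP : Measurable P) (hQ : Measurable Q) (hR : Measurable R) (hF : Measurable F) (c : ℝ≥0∞) :
    ∫⁻ X, ∫⁻ x, ∫⁻ y, ∫⁻ z, ∫⁻ ξ, P (y - X) * Q (y - x) * R (y - z) * F (x, ξ) * c
        ∂μ ∂μ ∂μ ∂μ ∂μ =
      (∫⁻ u, P u ∂μ) * (∫⁻ u, Q u ∂μ) * (∫⁻ u, R u ∂μ) * (∫⁻ x, ∫⁻ ξ, F (x, ξ) ∂μ ∂μ) * c := by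
  have hF' : Measurable fun x => ∫⁻ ξ, F (x, ξ) ∂μ := hF.lintegral_prod_right'
  rw [lintegral_lintegral_swap (by fun_prop)]
  conv_lhs => enter [2, x]; rw [lintegral_lintegral_swap (by fun_prop)]
  simp (disch := fun_prop) only [lintegral_mul_const, lintegral_const_mul,
    lintegral_sub_left_eq_self, lintegral_sub_right_eq_self]

theorem lintegral_window_kernel_le {P Q R K : E → ℝ≥0∞} {F G : E × E → ℝ≥0∞}
    (hP : Measurable P) (hQ : Measurable Q) (hR : Measurable R) (hK : Measurable K)
    (hF : Measurable F) (hG : Measurable G) :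
    ∫⁻ X, ∫⁻ Ξ, ∫⁻ x, ∫⁻ y, ∫⁻ z, ∫⁻ ξ, ∫⁻ η,
      P (y - X) * Q (y - x) * R (y - z) * F (x, ξ) * (K (ξ + η - Ξ) * G (z, η))
        ∂μ ∂μ ∂μ ∂μ ∂μ ∂μ ∂μ ≤
      (∫⁻ u, P u ∂μ) * (∫⁻ u, Q u ∂μ) * (∫⁻ u, R u ∂μ) * (∫⁻ x, ∫⁻ ξ, F (x, ξ) ∂μ ∂μ) *
        ((∫⁻ u, K u ∂μ) * ∫⁻ η, ⨆ z, G (z, η) ∂μ) := by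
  calc _ = ∫⁻ X, ∫⁻ x, ∫⁻ y, ∫⁻ z, ∫⁻ ξ, ∫⁻ Ξ, ∫⁻ η,
        P (y - X) * Q (y - x) * R (y - z) * F (x, ξ) * (K (ξ + η - Ξ) * G (z, η))
          ∂μ ∂μ ∂μ ∂μ ∂μ ∂μ ∂μ := by
        refine lintegral_congr fun X => ?_
        conv_lhs =>
          rw [lintegral_lintegral_swap (by fun_prop)]; enter [2, x]
          rw [lintegral_lintegral_swap (by fun_prop)]; enter [2, y]
          rw [lintegral_lintegral_swap (by fun_prop)]; enter [2, z]
          rw [lintegral_lintegral_swap (by fun_prop)]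
    _ ≤ ∫⁻ X, ∫⁻ x, ∫⁻ y, ∫⁻ z, ∫⁻ ξ, P (y - X) * Q (y - x) * R (y - z) * F (x, ξ) *
          ((∫⁻ u, K u ∂μ) * ∫⁻ η, ⨆ z, G (z, η) ∂μ) ∂μ ∂μ ∂μ ∂μ ∂μ := by
        gcongr with X x y z ξ
        exact lintegral_lintegral_const_mul_kernel_le hK hG _ ξ z
    _ = _ := lintegral_translates_mul hP hQ hR hF _

end Convolution

variable {d : ℕ}

theorem jap_nonneg (x : EuclideanSpace ℝ (Fin d)) : 0 ≤ jap x := Real.sqrt_nonneg _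

theorem jap_rpow (x : EuclideanSpace ℝ (Fin d)) (s : ℝ) :
    jap x ^ s = (1 + ‖x‖ ^ 2) ^ (s / 2) := by
  rw [jap, Real.sqrt_eq_rpow, ← Real.rpow_mul (by positivity)]
  ring_nf

@[fun_prop]
theorem continuous_jap : Continuous (jap : EuclideanSpace ℝ (Fin d) → ℝ) := by
  unfold jap
  fun_prop

theorem jap_rpow_le (r : ℝ) (X y x : EuclideanSpace ℝ (Fin d)) :
    jap X ^ r ≤ 2 ^ |r| * jap (y - X) ^ |r| * jap (y - x) ^ |r| * jap x ^ r := by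
  have hXy := one_add_norm_add_sq_rpow_le (r / 2) (X - y) y
  have hyx := one_add_norm_add_sq_rpow_le (r / 2) (y - x) x
  rw [sub_add_cancel, norm_sub_rev] at hXy
  rw [sub_add_cancel] at hyx
  have h2 : (2 : ℝ) ^ |r| = 2 ^ (|r| / 2) * 2 ^ (|r| / 2) := by
    rw [← Real.rpow_add two_pos, add_halves]
  simp only [jap_rpow, h2, abs_div, abs_two] at hXy hyx ⊢
  calc (1 + ‖X‖ ^ 2) ^ (r / 2)
      ≤ 2 ^ (|r| / 2) * (1 + ‖y - X‖ ^ 2) ^ (|r| / 2) * (1 + ‖y‖ ^ 2) ^ (r / 2) := hXy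
    _ ≤ 2 ^ (|r| / 2) * (1 + ‖y - X‖ ^ 2) ^ (|r| / 2) *
        (2 ^ (|r| / 2) * (1 + ‖y - x‖ ^ 2) ^ (|r| / 2) * (1 + ‖x‖ ^ 2) ^ (r / 2)) := by
      gcongr
    _ = _ := by ring

theorem ofReal_jap_rpow_le (r : ℝ) (X y x : EuclideanSpace ℝ (Fin d)) :
    ENNReal.ofReal (jap X ^ r) ≤ ENNReal.ofReal (2 ^ |r|) * ENNReal.ofReal (jap (y - X) ^ |r|) *
      ENNReal.ofReal (jap (y - x) ^ |r|) * ENNReal.ofReal (jap x ^ r) := by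
  refine (ENNReal.ofReal_le_ofReal (jap_rpow_le r X y x)).trans_eq ?_
  simp only [ENNReal.ofReal_mul' (Real.rpow_nonneg (jap_nonneg _) _)]

theorem lintegral_jap_rpow_neg_ne_top {s : ℝ} (hs : d < s) :
    ∫⁻ u : EuclideanSpace ℝ (Fin d), ENNReal.ofReal (jap u ^ (-s)) ≠ ⊤ := by
  have h := integrable_rpow_neg_one_add_norm_sq (E := EuclideanSpace ℝ (Fin d))
    (μ := volume) (r := s) (by rwa [finrank_euclideanSpace_fin])
  simp_rw [jap_rpow]
  exact h.lintegral_lt_top.ne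

theorem lintegral_jap_rpow_mul_enorm_ne_top (f : SchwartzMap (EuclideanSpace ℝ (Fin d)) ℂ)
    (s : ℝ) : ∫⁻ u, ENNReal.ofReal (jap u ^ s) * ‖f u‖ₑ ≠ ⊤ := by
  have hw := Function.hasTemperateGrowth_one_add_norm_sq_rpow (EuclideanSpace ℝ (Fin d)) (s / 2)
  have h := ((SchwartzMap.smulLeftCLM ℂ
    (fun x : EuclideanSpace ℝ (Fin d) => (1 + ‖x‖ ^ 2) ^ (s / 2)) f).integrable
      (μ := volume)).hasFiniteIntegral.ne
  simp_rw [SchwartzMap.smulLeftCLM_apply_apply hw, enorm_smul, ← jap_rpow,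
    Real.enorm_of_nonneg (Real.rpow_nonneg (jap_nonneg _) _)] at h
  exact h

def tripleWindowConst (φ g ψ : SchwartzMap (EuclideanSpace ℝ (Fin d)) ℂ) (r s : ℝ) : ℝ≥0∞ :=
  ENNReal.ofReal (2 ^ |r|) * (∫⁻ u, ENNReal.ofReal (jap u ^ |r|) * ‖φ u‖ₑ) *
    (∫⁻ u, ENNReal.ofReal (jap u ^ |r|) * ‖g u‖ₑ) * (∫⁻ u, ‖ψ u‖ₑ) *
    ∫⁻ u : EuclideanSpace ℝ (Fin d), ENNReal.ofReal (jap u ^ (-s))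

theorem tripleWindowConst_ne_top (φ g ψ : SchwartzMap (EuclideanSpace ℝ (Fin d)) ℂ) (r : ℝ)
    {s : ℝ} (hs : d < s) : tripleWindowConst φ g ψ r s ≠ ⊤ := by
  have := lintegral_jap_rpow_neg_ne_top hs
  have := lintegral_jap_rpow_mul_enorm_ne_top φ |r|
  have := lintegral_jap_rpow_mul_enorm_ne_top g |r|
  have := (ψ.integrable (μ := volume)).hasFiniteIntegral.ne
  unfold tripleWindowConst
  finiteness

theorem lintegral_triple_window_le (φ g ψ : SchwartzMap (EuclideanSpace ℝ (Fin d)) ℂ)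
    (r s : ℝ) {F G : EuclideanSpace ℝ (Fin d) × EuclideanSpace ℝ (Fin d) → ℝ≥0∞}
    (hF : Measurable F) (hG : Measurable G) :
    ∫⁻ X, ∫⁻ Ξ, ENNReal.ofReal (jap X ^ r) * ∫⁻ x, ∫⁻ y, ∫⁻ z, ∫⁻ ξ, ∫⁻ η,
      ENNReal.ofReal (jap (ξ + η - Ξ) ^ (-s)) * ‖φ (y - X)‖ₑ * ‖g (y - x)‖ₑ *
        ‖ψ (y - z)‖ₑ * G (z, η) * F (x, ξ) ≤
      tripleWindowConst φ g ψ r s * (∫⁻ η, ⨆ z, G (z, η)) *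
        ∫⁻ x, ∫⁻ ξ, ENNReal.ofReal (jap x ^ r) * F (x, ξ) := by
  simp only [← lintegral_const_mul' _ _ ENNReal.ofReal_ne_top]
  calc _ ≤ ∫⁻ X, ∫⁻ Ξ, ∫⁻ x, ∫⁻ y, ∫⁻ z, ∫⁻ ξ, ∫⁻ η, ENNReal.ofReal (2 ^ |r|) *
          ((ENNReal.ofReal (jap (y - X) ^ |r|) * ‖φ (y - X)‖ₑ) *
            (ENNReal.ofReal (jap (y - x) ^ |r|) * ‖g (y - x)‖ₑ) * ‖ψ (y - z)‖ₑ *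
            (ENNReal.ofReal (jap x ^ r) * F (x, ξ)) *
            (ENNReal.ofReal (jap (ξ + η - Ξ) ^ (-s)) * G (z, η))) := by
        gcongr ∫⁻ X, ∫⁻ Ξ, ∫⁻ x, ∫⁻ y, ∫⁻ z, ∫⁻ ξ, ∫⁻ η, ?_ with X Ξ x y z ξ η
        refine (mul_le_mul_left (ofReal_jap_rpow_le r X y x) _).trans_eq ?_
        ring
    _ ≤ ENNReal.ofReal (2 ^ |r|) * ((∫⁻ u, ENNReal.ofReal (jap u ^ |r|) * ‖φ u‖ₑ) *
          (∫⁻ u, ENNReal.ofReal (jap u ^ |r|) * ‖g u‖ₑ) * (∫⁻ u, ‖ψ u‖ₑ) *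
          (∫⁻ x, ∫⁻ ξ, ENNReal.ofReal (jap x ^ r) * F (x, ξ)) *
          ((∫⁻ u, ENNReal.ofReal (jap u ^ (-s))) * ∫⁻ η, ⨆ z, G (z, η))) := by
        conv_lhs => simp only [lintegral_const_mul' _ _ ENNReal.ofReal_ne_top]
        gcongr
        refine lintegral_window_kernel_le (μ := volume)
          (P := fun u => ENNReal.ofReal (jap u ^ |r|) * ‖φ u‖ₑ)
          (Q := fun u => ENNReal.ofReal (jap u ^ |r|) * ‖g u‖ₑ) (R := fun u => ‖ψ u‖ₑ)
          (K := fun u => ENNReal.ofReal (jap u ^ (-s)))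
          (F := fun p => ENNReal.ofReal (jap p.1 ^ r) * F p) ?_ ?_ ?_ ?_ ?_ hG <;> fun_prop
    _ = _ := by
        unfold tripleWindowConst
        ring

/-- weighted convolution-type bound for a triple-window kernel:
for `φ, g, ψ ∈ 𝒮(ℝ^d)`, `r ∈ ℝ`, `2N > d`, there is `C > 0` with
`∬ ⟨X⟩^r ∫ ⟨ξ+η−Ξ⟩^{−2N} |φ(y−X)||g(y−x)||ψ(y−z)| G(z,η) F(x,ξ) ≤
  C (∫ sup_z G(z,η) dη)(∬ ⟨x⟩^r F(x,ξ) dx dξ)` for all nonnegative measurable `F, G`. -/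
theorem triple_window_kernel_bound {d : ℕ}
    (φ g ψ : SchwartzMap (EuclideanSpace ℝ (Fin d)) ℂ) (r : ℝ) (N : ℕ)
    (hN : d < 2 * N) :
    ∃ C : ℝ≥0, 0 < C ∧
      ∀ F G : EuclideanSpace ℝ (Fin d) × EuclideanSpace ℝ (Fin d) → ℝ≥0∞,
        Measurable F → Measurable G →
        (∫⁻ X : EuclideanSpace ℝ (Fin d), ∫⁻ Ξ : EuclideanSpace ℝ (Fin d),
          ENNReal.ofReal (jap X ^ r) *
            ∫⁻ x : EuclideanSpace ℝ (Fin d), ∫⁻ y : EuclideanSpace ℝ (Fin d),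
              ∫⁻ z : EuclideanSpace ℝ (Fin d), ∫⁻ ξ : EuclideanSpace ℝ (Fin d),
                ∫⁻ η : EuclideanSpace ℝ (Fin d),
                  ENNReal.ofReal (jap (ξ + η - Ξ) ^ (-(2 * N : ℝ))) *
                    (‖φ (y - X)‖₊ : ℝ≥0∞) * (‖g (y - x)‖₊ : ℝ≥0∞) *
                    (‖ψ (y - z)‖₊ : ℝ≥0∞) * G (z, η) * F (x, ξ)) ≤
        C * (∫⁻ η : EuclideanSpace ℝ (Fin d), ⨆ z : EuclideanSpace ℝ (Fin d), G (z, η)) *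
          ∫⁻ x : EuclideanSpace ℝ (Fin d), ∫⁻ ξ : EuclideanSpace ℝ (Fin d),
            ENNReal.ofReal (jap x ^ r) * F (x, ξ) := by
  have hC := tripleWindowConst_ne_top φ g ψ r (s := 2 * N) (by exact_mod_cast hN)
  refine ⟨(tripleWindowConst φ g ψ r (2 * N)).toNNReal + 1, by positivity,
    fun F G hF hG => ?_⟩
  simp only [← enorm_eq_nnnorm]
  refine (lintegral_triple_window_le φ g ψ r (2 * N) hF hG).trans ?_
  gcongr
  rw [ENNReal.coe_add, ENNReal.coe_toNNReal hC]
  exact le_self_add
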